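/- arXiv:1204.4075 — 2 statements merged into one kernel-verified Lean document; each statement's English description precedes it below -/
import Mathlib

section
/- Let Φ(s,r,θ) := γ(s) + r cos θ · n(s) + r sin θ · b(s) and let φ : ℝ³ → ℝ be continuously differentiable; set ψ := φ ∘ Φ. Then for all s ∈ [0,1], r > 0, θ ∈ ℝ with r κ(s) cos θ < 1, the Euclidean gradient of φ satisfies (∇φ)(Φ(s,r,θ)) = Ξ(s,r,θ)·(∂ψ/∂s − τ(s) ∂ψ/∂θ)(s,r,θ) · t(s) + (cos θ · ∂ψ/∂r − (sin θ / r) ∂ψ/∂θ)(s,r,θ) · n(s) + (sin θ · ∂ψ/∂r + (cos θ / r) ∂ψ/∂θ)(s,r,θ) · b(s), where Ξ(s,r,θ) := (1 − r κ(s) cos θ)⁻¹. -/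
open Real
open RealInnerProductSpace Matrix

section aux
open RealInnerProductSpace Matrix

lemma decomp3 (t n b g : EuclideanSpace ℝ (Fin 3))
    (htt : ⟪t, t⟫ = 1) (hnn : ⟪n, n⟫ = 1) (hbb : ⟪b, b⟫ = 1)
    (htn : ⟪t, n⟫ = 0) (htb : ⟪t, b⟫ = 0) (hnb : ⟪n, b⟫ = 0) :
    g = ⟪g, t⟫ • t + ⟪g, n⟫ • n + ⟪g, b⟫ • b := by
  simp only [PiLp.inner_apply, RCLike.inner_apply, conj_trivial, Fin.sum_univ_three] at *
  set M : Matrix (Fin 3) (Fin 3) ℝ := Matrix.of ![(t : Fin 3 → ℝ), n, b] with hM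
  have h1 : M * Mᵀ = 1 := by
    ext i j
    fin_cases i <;> fin_cases j <;>
      simp [hM, Matrix.mul_apply, Matrix.transpose_apply, Fin.sum_univ_three,
        Matrix.one_apply, Matrix.vecHead, Matrix.vecTail, Function.comp] <;>
      first
        | linear_combination htt | linear_combination hnn | linear_combination hbb
        | linear_combination htn | linear_combination htb | linear_combination hnb
  have h2 : Mᵀ * M = 1 := mul_eq_one_comm.mp h1
  have key : ∀ i j : Fin 3, t i * t j + n i * n j + b i * b j = if i = j then 1 else 0 := by
    intro i j
    have := congrFun (congrFun h2 i) j
    simpa [hM, Matrix.mul_apply, Fin.sum_univ_three, Matrix.one_apply] using this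
  ext i
  have k0 := key 0 i; have k1 := key 1 i; have k2 := key 2 i
  fin_cases i <;>
    simp only [Fin.zero_eta, Fin.mk_one, Fin.reduceFinMk, Fin.isValue] at k0 k1 k2 ⊢ <;>
    norm_num [Fin.ext_iff] at k0 k1 k2 ⊢ <;>
    linear_combination (-(g 0 * k0) - g 1 * k1 - g 2 * k2)

end aux

set_option maxHeartbeats 2000000

/-- Cross product of vectors in `EuclideanSpace ℝ (Fin 3)`. -/
noncomputable def cross3 (u v : EuclideanSpace ℝ (Fin 3)) : EuclideanSpace ℝ (Fin 3) :=
  (WithLp.equiv 2 (Fin 3 → ℝ)).symm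
    ![u 1 * v 2 - u 2 * v 1, u 2 * v 0 - u 0 * v 2, u 0 * v 1 - u 1 * v 0]

/-- The Euclidean gradient of φ in tube coordinates:
`∇φ(Φ(s,r,θ)) = Ξ(ψ_s − τ ψ_θ) t + (cos θ ψ_r − (sin θ/r) ψ_θ) n + (sin θ ψ_r + (cos θ/r) ψ_θ) b`
where `ψ = φ ∘ Φ` and `Ξ = (1 − rκ cos θ)⁻¹`. -/
theorem gradient_in_tube_coordinates
    (γ tv nv bv : ℝ → EuclideanSpace ℝ (Fin 3)) (κ τ : ℝ → ℝ)
    (hγ : ContDiff ℝ (⊤ : ℕ∞) γ)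
    (ht : ∀ s, tv s = deriv γ s)
    (htunit : ∀ s, ‖deriv γ s‖ = 1)
    (hκ : ∀ s, κ s = ‖deriv (deriv γ) s‖)
    (hκpos : ∀ s, 0 < κ s)
    (hn : ∀ s, nv s = (κ s)⁻¹ • deriv tv s)
    (hb : ∀ s, bv s = cross3 (tv s) (nv s))
    (hFrenet1 : ∀ s, deriv tv s = κ s • nv s)
    (hFrenet2 : ∀ s, deriv nv s = (-κ s) • tv s + τ s • bv s)
    (hFrenet3 : ∀ s, deriv bv s = (-τ s) • nv s)
    (Φ : ℝ → ℝ → ℝ → EuclideanSpace ℝ (Fin 3))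
    (hΦ : ∀ s r θ, Φ s r θ = γ s + (r * Real.cos θ) • nv s + (r * Real.sin θ) • bv s)
    (φ : EuclideanSpace ℝ (Fin 3) → ℝ) (hφ : ContDiff ℝ 1 φ)
    (ψ : ℝ → ℝ → ℝ → ℝ) (hψ : ∀ s r θ, ψ s r θ = φ (Φ s r θ))
    (s r θ : ℝ) (hs : s ∈ Set.Icc (0:ℝ) 1) (hr : 0 < r)
    (hΞ : r * κ s * Real.cos θ < 1) :
    gradient φ (Φ s r θ)
      = ((1 - r * κ s * Real.cos θ)⁻¹
            * (deriv (fun s' => ψ s' r θ) s - τ s * deriv (fun θ' => ψ s r θ') θ)) • tv s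
        + (Real.cos θ * deriv (fun r' => ψ s r' θ) r
            - (Real.sin θ / r) * deriv (fun θ' => ψ s r θ') θ) • nv s
        + (Real.sin θ * deriv (fun r' => ψ s r' θ) r
            + (Real.cos θ / r) * deriv (fun θ' => ψ s r θ') θ) • bv s := by
  have hrne : r ≠ 0 := ne_of_gt hr
  have h1ne : (1 : ℝ) - r * κ s * Real.cos θ ≠ 0 := by linarith
  -- basic smoothness
  have htv : tv = deriv γ := funext ht
  have hγi : ContDiff ℝ (⊤ : ℕ∞) γ := hγ.of_le (by simp)
  have hdγ : Differentiable ℝ γ := hγi.differentiable (by simp)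
  have hγ' : ContDiff ℝ (⊤ : ℕ∞) (deriv γ) := (contDiff_infty_iff_deriv.mp hγi).2
  have htvCD : ContDiff ℝ (⊤ : ℕ∞) tv := htv ▸ hγ'
  have htv' : deriv tv = deriv (deriv γ) := by rw [htv]
  have hg2CD : ContDiff ℝ (⊤ : ℕ∞) (deriv tv) := by
    rw [htv']; exact (contDiff_infty_iff_deriv.mp hγ').2
  have hκnorm : ∀ x, ‖deriv tv x‖ = κ x := fun x => by rw [htv', ← hκ]
  have hg2ne : ∀ x, deriv tv x ≠ 0 := by
    intro x h
    have hx := hκnorm x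
    rw [h, norm_zero] at hx
    exact (hκpos x).ne' hx.symm
  have hnvfun : nv = fun x => (κ x)⁻¹ • deriv tv x := funext hn
  have hnvdiff : ∀ x, DifferentiableAt ℝ nv x := by
    intro x
    rw [hnvfun]
    have hκfun : ContDiffAt ℝ 1 (fun y => ‖deriv tv y‖) x :=
      (hg2CD.contDiffAt.of_le (by exact_mod_cast le_top)).norm ℝ (hg2ne x)
    have hκeq : (fun y => (κ y)⁻¹) = fun y => (‖deriv tv y‖)⁻¹ := by
      funext y; rw [hκnorm y]
    have hinv : ContDiffAt ℝ 1 (fun y => (κ y)⁻¹) x := by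
      rw [hκeq]
      exact hκfun.inv (by simpa [hκnorm x] using (hκpos x).ne')
    exact (hinv.smul (hg2CD.contDiffAt.of_le (by exact_mod_cast le_top))).differentiableAt one_ne_zero
  have htvdiff : ∀ x, DifferentiableAt ℝ tv x := fun x =>
    (htvCD.differentiable (by simp)).differentiableAt
  have hbvfun : bv = fun x => cross3 (tv x) (nv x) := funext hb
  have hbvdiff : ∀ x, DifferentiableAt ℝ bv x := by
    intro x
    rw [hbvfun]
    have htc : ∀ i, DifferentiableAt ℝ (fun y => tv y i) x := fun i =>
      differentiableAt_euclidean.mp (htvdiff x) i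
    have hnc : ∀ i, DifferentiableAt ℝ (fun y => nv y i) x := fun i =>
      differentiableAt_euclidean.mp (hnvdiff x) i
    apply differentiableAt_euclidean.mpr
    intro i
    fin_cases i
    · exact ((htc 1).mul (hnc 2)).sub ((htc 2).mul (hnc 1))
    · exact ((htc 2).mul (hnc 0)).sub ((htc 0).mul (hnc 2))
    · exact ((htc 0).mul (hnc 1)).sub ((htc 1).mul (hnc 0))
  -- orthonormality at s
  have htt : ⟪tv s, tv s⟫ = 1 := by
    rw [real_inner_self_eq_norm_sq, ht, htunit]; norm_num
  have hnorm_n : ‖nv s‖ = 1 := by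
    rw [hn, norm_smul, hκnorm, Real.norm_eq_abs, abs_inv, abs_of_pos (hκpos s),
      inv_mul_cancel₀ (hκpos s).ne']
  have hnn : ⟪nv s, nv s⟫ = 1 := by
    rw [real_inner_self_eq_norm_sq, hnorm_n]; norm_num
  have htn : ⟪tv s, nv s⟫ = 0 := by
    have hconst : (fun x => ⟪tv x, tv x⟫) = fun _ => (1 : ℝ) := by
      funext x
      rw [real_inner_self_eq_norm_sq, ht, htunit]; norm_num
    have h1 : HasDerivAt (fun x => ⟪tv x, tv x⟫)
        (⟪tv s, deriv tv s⟫ + ⟪deriv tv s, tv s⟫) s :=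
      ((htvdiff s).hasDerivAt).inner ℝ ((htvdiff s).hasDerivAt)
    have h0 : HasDerivAt (fun x => ⟪tv x, tv x⟫) 0 s := by
      rw [hconst]; exact hasDerivAt_const s 1
    have hu := h1.unique h0
    rw [hFrenet1, real_inner_smul_right, real_inner_smul_left] at hu
    rw [real_inner_comm (tv s) (nv s)] at hu
    have h2 : κ s * ⟪tv s, nv s⟫ = 0 := by linarith
    exact (mul_eq_zero.mp h2).resolve_left (hκpos s).ne'
  have htb : ⟪tv s, bv s⟫ = 0 := by
    rw [hb]
    simp [cross3, PiLp.inner_apply, Fin.sum_univ_three]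
    ring
  have hnb : ⟪nv s, bv s⟫ = 0 := by
    rw [hb]
    simp [cross3, PiLp.inner_apply, Fin.sum_univ_three]
    ring
  have hbb : ⟪bv s, bv s⟫ = 1 := by
    have e1 := htt; have e2 := hnn; have e3 := htn
    simp only [PiLp.inner_apply, RCLike.inner_apply, conj_trivial,
      Fin.sum_univ_three] at e1 e2 e3 ⊢
    rw [hb]
    simp only [cross3]
    show (tv s 1 * nv s 2 - tv s 2 * nv s 1) * (tv s 1 * nv s 2 - tv s 2 * nv s 1)
        + (tv s 2 * nv s 0 - tv s 0 * nv s 2) * (tv s 2 * nv s 0 - tv s 0 * nv s 2)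
        + (tv s 0 * nv s 1 - tv s 1 * nv s 0) * (tv s 0 * nv s 1 - tv s 1 * nv s 0) = 1
    linear_combination (nv s 0 * nv s 0 + nv s 1 * nv s 1 + nv s 2 * nv s 2) * e1 + e2
      - (tv s 0 * nv s 0 + tv s 1 * nv s 1 + tv s 2 * nv s 2) * e3
  -- gradient and fderiv
  have hφd : DifferentiableAt ℝ φ (Φ s r θ) :=
    (hφ.differentiable one_ne_zero).differentiableAt
  have hgrad : ∀ v, fderiv ℝ φ (Φ s r θ) v = ⟪gradient φ (Φ s r θ), v⟫ := by
    intro v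
    rw [← InnerProductSpace.toDual_apply_apply]
    congr 1
    simp only [gradient, LinearIsometryEquiv.apply_symm_apply]
  set g : EuclideanSpace ℝ (Fin 3) := gradient φ (Φ s r θ) with hg
  set A := ⟪g, tv s⟫ with hA
  set B := ⟪g, nv s⟫ with hB
  set C := ⟪g, bv s⟫ with hC
  -- derivative in s
  have hψs : deriv (fun s' => ψ s' r θ) s
      = (1 - r * κ s * Real.cos θ) * A
        - r * τ s * Real.sin θ * B + r * τ s * Real.cos θ * C := by
    have hfun : (fun s' => Φ s' r θ)
        = fun s' => γ s' + (r * Real.cos θ) • nv s' + (r * Real.sin θ) • bv s' :=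
      funext fun s' => hΦ s' r θ
    have hΦs : HasDerivAt (fun s' => Φ s' r θ)
        (deriv γ s + (r * Real.cos θ) • deriv nv s + (r * Real.sin θ) • deriv bv s) s := by
      rw [hfun]
      exact (((hdγ s).hasDerivAt.add ((hnvdiff s).hasDerivAt.const_smul (r * Real.cos θ))).add
        ((hbvdiff s).hasDerivAt.const_smul (r * Real.sin θ)))
    have hψfun : (fun s' => ψ s' r θ) = fun s' => φ (Φ s' r θ) :=
      funext fun s' => hψ s' r θ
    have hd : HasDerivAt (fun s' => ψ s' r θ)
        (fderiv ℝ φ (Φ s r θ)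
          (deriv γ s + (r * Real.cos θ) • deriv nv s + (r * Real.sin θ) • deriv bv s)) s := by
      rw [hψfun]
      exact hφd.hasFDerivAt.comp_hasDerivAt s hΦs
    rw [hd.deriv, hgrad, ← ht s, hFrenet2, hFrenet3]
    rw [inner_add_right, inner_add_right, real_inner_smul_right, real_inner_smul_right,
      inner_add_right, real_inner_smul_right, real_inner_smul_right, real_inner_smul_right]
    rw [← hA, ← hB, ← hC]
    ring
  -- derivative in r
  have hψr : deriv (fun r' => ψ s r' θ) r = Real.cos θ * B + Real.sin θ * C := by
    have hfun : (fun r' => Φ s r' θ)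
        = fun r' => γ s + (r' * Real.cos θ) • nv s + (r' * Real.sin θ) • bv s :=
      funext fun r' => hΦ s r' θ
    have hΦr : HasDerivAt (fun r' => Φ s r' θ)
        (Real.cos θ • nv s + Real.sin θ • bv s) r := by
      rw [hfun]
      have h1 : HasDerivAt (fun r' : ℝ => (r' * Real.cos θ) • nv s)
          (Real.cos θ • nv s) r := (hasDerivAt_mul_const (Real.cos θ)).smul_const (nv s)
      have h2 : HasDerivAt (fun r' : ℝ => (r' * Real.sin θ) • bv s)
          (Real.sin θ • bv s) r := (hasDerivAt_mul_const (Real.sin θ)).smul_const (bv s)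
      exact (((hasDerivAt_const r (γ s)).add h1).add h2).congr_deriv (by rw [zero_add])
    have hψfun : (fun r' => ψ s r' θ) = fun r' => φ (Φ s r' θ) :=
      funext fun r' => hψ s r' θ
    have hd : HasDerivAt (fun r' => ψ s r' θ)
        (fderiv ℝ φ (Φ s r θ) (Real.cos θ • nv s + Real.sin θ • bv s)) r := by
      rw [hψfun]
      exact hφd.hasFDerivAt.comp_hasDerivAt r hΦr
    rw [hd.deriv, hgrad, inner_add_right, real_inner_smul_right, real_inner_smul_right,
      ← hB, ← hC]
  -- derivative in θ
  have hψθ : deriv (fun θ' => ψ s r θ') θ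
      = (r * -Real.sin θ) * B + (r * Real.cos θ) * C := by
    have hfun : (fun θ' => Φ s r θ')
        = fun θ' => γ s + (r * Real.cos θ') • nv s + (r * Real.sin θ') • bv s :=
      funext fun θ' => hΦ s r θ'
    have hΦθ : HasDerivAt (fun θ' => Φ s r θ')
        ((r * -Real.sin θ) • nv s + (r * Real.cos θ) • bv s) θ := by
      rw [hfun]
      have h1 : HasDerivAt (fun θ' : ℝ => (r * Real.cos θ') • nv s)
          ((r * -Real.sin θ) • nv s) θ :=
        (((Real.hasDerivAt_cos θ).const_mul r)).smul_const (nv s)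
      have h2 : HasDerivAt (fun θ' : ℝ => (r * Real.sin θ') • bv s)
          ((r * Real.cos θ) • bv s) θ :=
        (((Real.hasDerivAt_sin θ).const_mul r)).smul_const (bv s)
      exact (((hasDerivAt_const θ (γ s)).add h1).add h2).congr_deriv (by rw [zero_add])
    have hψfun : (fun θ' => ψ s r θ') = fun θ' => φ (Φ s r θ') :=
      funext fun θ' => hψ s r θ'
    have hd : HasDerivAt (fun θ' => ψ s r θ')
        (fderiv ℝ φ (Φ s r θ)
          ((r * -Real.sin θ) • nv s + (r * Real.cos θ) • bv s)) θ := by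
      rw [hψfun]
      exact hφd.hasFDerivAt.comp_hasDerivAt θ hΦθ
    rw [hd.deriv, hgrad, inner_add_right, real_inner_smul_right, real_inner_smul_right,
      ← hB, ← hC]
  -- decomposition
  have hdec : g = A • tv s + B • nv s + C • bv s :=
    decomp3 (tv s) (nv s) (bv s) g htt hnn hbb htn htb hnb
  rw [hdec, hψs, hψr, hψθ]
  match_scalars
  · field_simp
    ring
  · field_simp
    linear_combination (-B) * Real.sin_sq_add_cos_sq θ
  · field_simp
    linear_combination (-C) * Real.sin_sq_add_cos_sq θ
end

section
/- Let Φ(s,r,θ) := γ(s) + r cos θ · n(s) + r sin θ · b(s), let φ : ℝ³ → ℝ be continuously differentiable, set ψ := φ ∘ Φ, and let ν(s,θ) be the exterior unit normal to the tube wall at Φ(s,R(s),θ), i.e. the unit vector in the direction of R(s)[−R'(s) t(s) + (1−κ(s)R(s))(cos θ · n(s) + sin θ · b(s))]. Then for all s ∈ [0,1] and θ ∈ ℝ (assuming η(s) := R(s)κ(s) < 1): ν(s,θ) · (∇φ)(Φ(s,R(s),θ)) = (R(s)/W(s)) · [ −R'(s) Ξ(s,R(s),θ) · (∂ψ/∂s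 − τ(s) ∂ψ/∂θ)(s,R(s),θ) + (1 − κ(s)R(s)) · (∂ψ/∂r)(s,R(s),θ) ], where Ξ(s,r,θ) := (1 − r κ(s) cos θ)⁻¹ and W(s) := R(s)·√(R'(s)² + (1 − η(s))²). -/
open Real

lemma inner3 (u v : EuclideanSpace ℝ (Fin 3)) :
    (inner ℝ u v : ℝ) = u 0 * v 0 + u 1 * v 1 + u 2 * v 2 := by
  simp [PiLp.inner_apply, Fin.sum_univ_three, RCLike.inner_apply, mul_comm]

lemma cross3_apply (u v : EuclideanSpace ℝ (Fin 3)) (i : Fin 3) :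
    cross3 u v i = ![u 1 * v 2 - u 2 * v 1, u 2 * v 0 - u 0 * v 2, u 0 * v 1 - u 1 * v 0] i := by
  rw [cross3]; rfl

lemma cross3_differentiableAt {u v : ℝ → EuclideanSpace ℝ (Fin 3)} {x : ℝ}
    (hu : DifferentiableAt ℝ u x) (hv : DifferentiableAt ℝ v x) :
    DifferentiableAt ℝ (fun t => cross3 (u t) (v t)) x := by
  have hui : ∀ i : Fin 3, DifferentiableAt ℝ (fun t => u t i) x := fun i => by
    have h : (fun t => u t i) = (EuclideanSpace.proj (𝕜 := ℝ) i) ∘ u := rfl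
    rw [h]
    exact (EuclideanSpace.proj i).differentiableAt.comp x hu
  have hvi : ∀ i : Fin 3, DifferentiableAt ℝ (fun t => v t i) x := fun i => by
    have h : (fun t => v t i) = (EuclideanSpace.proj (𝕜 := ℝ) i) ∘ v := rfl
    rw [h]
    exact (EuclideanSpace.proj i).differentiableAt.comp x hv
  have hF : DifferentiableAt ℝ (fun t => (fun i : Fin 3 =>
      ![u t 1 * v t 2 - u t 2 * v t 1, u t 2 * v t 0 - u t 0 * v t 2,
        u t 0 * v t 1 - u t 1 * v t 0] i)) x := by
    rw [differentiableAt_pi]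
    intro i
    fin_cases i <;> simp <;>
      exact ((hui _).mul (hvi _)).sub ((hui _).mul (hvi _))
  exact ((EuclideanSpace.equiv (Fin 3) ℝ).symm.differentiableAt.comp x hF)

set_option maxHeartbeats 1600000 in
/-- The exterior normal derivative on the tube wall:
`ν·∇φ = (R/W)(−R' Ξ (ψ_s − τ ψ_θ) + (1 − κR) ψ_r)` at `(s, R(s), θ)`, where ν is the
exterior unit normal, `Ξ = (1 − rκ cos θ)⁻¹` and `W = R √(R'² + (1 − η)²)`. -/
theorem normal_derivative_on_tube_wall
    (γ tv nv bv : ℝ → EuclideanSpace ℝ (Fin 3)) (κ τ : ℝ → ℝ)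
    (hγ : ContDiff ℝ (⊤ : ℕ∞) γ)
    (ht : ∀ s, tv s = deriv γ s)
    (htunit : ∀ s, ‖deriv γ s‖ = 1)
    (hκ : ∀ s, κ s = ‖deriv (deriv γ) s‖)
    (hκpos : ∀ s, 0 < κ s)
    (hn : ∀ s, nv s = (κ s)⁻¹ • deriv tv s)
    (hb : ∀ s, bv s = cross3 (tv s) (nv s))
    (hFrenet1 : ∀ s, deriv tv s = κ s • nv s)
    (hFrenet2 : ∀ s, deriv nv s = (-κ s) • tv s + τ s • bv s)
    (hFrenet3 : ∀ s, deriv bv s = (-τ s) • nv s)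
    (R : ℝ → ℝ) (hR : ContDiff ℝ (⊤ : ℕ∞) R) (hRpos : ∀ s, 0 < R s)
    (Φ : ℝ → ℝ → ℝ → EuclideanSpace ℝ (Fin 3))
    (hΦ : ∀ s r θ, Φ s r θ = γ s + (r * Real.cos θ) • nv s + (r * Real.sin θ) • bv s)
    (φ : EuclideanSpace ℝ (Fin 3) → ℝ) (hφ : ContDiff ℝ 1 φ)
    (ψ : ℝ → ℝ → ℝ → ℝ) (hψ : ∀ s r θ, ψ s r θ = φ (Φ s r θ))
    (ν : ℝ → ℝ → EuclideanSpace ℝ (Fin 3))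
    (hν : ∀ s θ, ν s θ =
      ‖R s • ((-(deriv R s)) • tv s
          + (1 - κ s * R s) • (Real.cos θ • nv s + Real.sin θ • bv s))‖⁻¹
        • (R s • ((-(deriv R s)) • tv s
          + (1 - κ s * R s) • (Real.cos θ • nv s + Real.sin θ • bv s))))
    (s θ : ℝ) (hs : s ∈ Set.Icc (0:ℝ) 1) (hη : R s * κ s < 1) :
    (inner ℝ (ν s θ) (gradient φ (Φ s (R s) θ)) : ℝ)
      = (R s / (R s * Real.sqrt ((deriv R s) ^ 2 + (1 - R s * κ s) ^ 2)))
        * (-(deriv R s) * (1 - R s * κ s * Real.cos θ)⁻¹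
              * (deriv (fun s' => ψ s' (R s) θ) s - τ s * deriv (fun θ' => ψ s (R s) θ') θ)
            + (1 - κ s * R s) * deriv (fun r' => ψ s r' θ) (R s)) := by
  -- basic smoothness facts
  have hle : ((⊤:ℕ∞) : WithTop ℕ∞) ≠ 0 := by simp
  have hgsm : ContDiff ℝ ((⊤:ℕ∞) : WithTop ℕ∞) γ := hγ.of_le (by simp)
  have hγ1 : ContDiff ℝ ((⊤:ℕ∞) : WithTop ℕ∞) (deriv γ) := (contDiff_infty_iff_deriv.mp hgsm).2
  have hγ2 : ContDiff ℝ ((⊤:ℕ∞) : WithTop ℕ∞) (deriv (deriv γ)) :=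
    (contDiff_infty_iff_deriv.mp hγ1).2
  have htv : tv = deriv γ := funext ht
  have hdtv : deriv tv = deriv (deriv γ) := by rw [htv]
  have hγ''ne : deriv (deriv γ) s ≠ 0 := by
    intro h
    have := hκpos s
    rw [hκ s, h, norm_zero] at this
    exact lt_irrefl 0 this
  have hκdiff : DifferentiableAt ℝ κ s := by
    have : κ = fun x => ‖deriv (deriv γ) x‖ := funext hκ
    rw [this]
    exact ((hγ2.contDiffAt).norm ℝ hγ''ne).differentiableAt hle
  have htvdiff : DifferentiableAt ℝ tv s := by
    rw [htv]; exact hγ1.differentiable hle s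
  have hnvdiff : DifferentiableAt ℝ nv s := by
    have hnf : nv = fun x => (κ x)⁻¹ • deriv tv x := funext hn
    rw [hnf, hdtv]
    exact (hκdiff.inv (ne_of_gt (hκpos s))).smul (hγ2.differentiable hle s)
  have hbvdiff : DifferentiableAt ℝ bv s := by
    have hbf : bv = fun x => cross3 (tv x) (nv x) := funext hb
    rw [hbf]
    exact cross3_differentiableAt htvdiff hnvdiff
  -- orthonormality of the frame at s
  have hTT : (inner ℝ (tv s) (tv s) : ℝ) = 1 := by
    rw [real_inner_self_eq_norm_sq, ht s, htunit s]; norm_num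
  have key : (inner ℝ (deriv γ s) (deriv (deriv γ) s) : ℝ) = 0 := by
    have hconst : (fun x => (inner ℝ (deriv γ x) (deriv γ x) : ℝ)) = fun _ => 1 := by
      funext x
      rw [real_inner_self_eq_norm_sq, htunit x]; norm_num
    have hd : HasDerivAt (fun x => (inner ℝ (deriv γ x) (deriv γ x) : ℝ))
        ((inner ℝ (deriv γ s) (deriv (deriv γ) s) : ℝ)
          + (inner ℝ (deriv (deriv γ) s) (deriv γ s) : ℝ)) s :=
      HasDerivAt.inner ℝ (hγ1.differentiable hle s).hasDerivAt
        (hγ1.differentiable hle s).hasDerivAt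
    rw [hconst] at hd
    have h0 := hd.unique (hasDerivAt_const s 1)
    have h1 := real_inner_comm (deriv γ s) (deriv (deriv γ) s)
    linarith
  have hTN : (inner ℝ (tv s) (nv s) : ℝ) = 0 := by
    rw [ht s, hn s, hdtv, real_inner_smul_right, key, mul_zero]
  have hNN : (inner ℝ (nv s) (nv s) : ℝ) = 1 := by
    have hnorm : ‖nv s‖ = 1 := by
      rw [hn s, hdtv, norm_smul, ← hκ s, Real.norm_eq_abs,
        abs_of_pos (inv_pos.mpr (hκpos s)), inv_mul_cancel₀ (ne_of_gt (hκpos s))]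
    rw [real_inner_self_eq_norm_sq, hnorm]; norm_num
  have hTB : (inner ℝ (tv s) (bv s) : ℝ) = 0 := by
    rw [hb s, inner3]
    simp only [cross3_apply]
    simp [Fin.isValue]
    ring
  have hNB : (inner ℝ (nv s) (bv s) : ℝ) = 0 := by
    rw [hb s, inner3]
    simp only [cross3_apply]
    simp [Fin.isValue]
    ring
  have hBB : (inner ℝ (bv s) (bv s) : ℝ) = 1 := by
    have lag : (inner ℝ (bv s) (bv s) : ℝ)
        = (inner ℝ (tv s) (tv s) : ℝ) * (inner ℝ (nv s) (nv s) : ℝ)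
          - (inner ℝ (tv s) (nv s) : ℝ) ^ 2 := by
      rw [hb s]
      simp only [inner3, cross3_apply]
      simp [Fin.isValue]
      ring
    rw [lag, hTT, hNN, hTN]; norm_num
  -- the gradient as the fderiv
  set x₀ := Φ s (R s) θ with hx₀
  have hφd : DifferentiableAt ℝ φ x₀ := (hφ.differentiable one_ne_zero) x₀
  set f := fderiv ℝ φ x₀ with hf
  have hgrad : ∀ v : EuclideanSpace ℝ (Fin 3), (inner ℝ (gradient φ x₀) v : ℝ) = f v := by
    intro v
    rw [gradient]
    exact InnerProductSpace.toDual_symm_apply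
  -- derivative in θ
  have hΦθ : HasDerivAt (fun θ' => Φ s (R s) θ')
      ((-(R s * Real.sin θ)) • nv s + (R s * Real.cos θ) • bv s) θ := by
    have h1 : HasDerivAt (fun θ' => R s * Real.cos θ') (-(R s * Real.sin θ)) θ := by
      simpa [mul_comm] using (Real.hasDerivAt_cos θ).const_mul (R s)
    have h2 : HasDerivAt (fun θ' => R s * Real.sin θ') (R s * Real.cos θ) θ := by
      simpa [mul_comm] using (Real.hasDerivAt_sin θ).const_mul (R s)
    have h := ((h1.smul_const (nv s)).const_add (γ s)).add (h2.smul_const (bv s))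
    have hfun : (fun θ' => Φ s (R s) θ')
        = fun θ' => γ s + (R s * Real.cos θ') • nv s + (R s * Real.sin θ') • bv s := by
      funext θ'; rw [hΦ]
    rw [hfun]
    exact h
  have hψθ : deriv (fun θ' => ψ s (R s) θ') θ
      = f ((-(R s * Real.sin θ)) • nv s + (R s * Real.cos θ) • bv s) := by
    have hcomp := hφd.hasFDerivAt.comp_hasDerivAt θ hΦθ
    have hfun : (fun θ' => ψ s (R s) θ') = fun θ' => φ (Φ s (R s) θ') := by
      funext θ'; rw [hψ]
    rw [hfun]
    exact hcomp.deriv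
  -- derivative in r
  have hΦr : HasDerivAt (fun r' => Φ s r' θ)
      (Real.cos θ • nv s + Real.sin θ • bv s) (R s) := by
    have h1 : HasDerivAt (fun r' : ℝ => r' * Real.cos θ) (Real.cos θ) (R s) := by
      simpa using (hasDerivAt_id (R s)).mul_const (Real.cos θ)
    have h2 : HasDerivAt (fun r' : ℝ => r' * Real.sin θ) (Real.sin θ) (R s) := by
      simpa using (hasDerivAt_id (R s)).mul_const (Real.sin θ)
    have h := ((h1.smul_const (nv s)).const_add (γ s)).add (h2.smul_const (bv s))
    have hfun : (fun r' => Φ s r' θ)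
        = fun r' => γ s + (r' * Real.cos θ) • nv s + (r' * Real.sin θ) • bv s := by
      funext r'; rw [hΦ]
    rw [hfun]
    exact h
  have hψr : deriv (fun r' => ψ s r' θ) (R s)
      = f (Real.cos θ • nv s + Real.sin θ • bv s) := by
    have hcomp := hφd.hasFDerivAt.comp_hasDerivAt (R s) hΦr
    have hfun : (fun r' => ψ s r' θ) = fun r' => φ (Φ s r' θ) := by
      funext r'; rw [hψ]
    rw [hfun]
    exact hcomp.deriv
  -- derivative in s
  have hγds : HasDerivAt γ (tv s) s := by
    rw [ht s]; exact (hgsm.differentiable hle s).hasDerivAt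
  have hnds : HasDerivAt nv ((-κ s) • tv s + τ s • bv s) s := by
    have h := hnvdiff.hasDerivAt
    rwa [hFrenet2 s] at h
  have hbds : HasDerivAt bv ((-τ s) • nv s) s := by
    have h := hbvdiff.hasDerivAt
    rwa [hFrenet3 s] at h
  have hΦs : HasDerivAt (fun s' => Φ s' (R s) θ)
      (tv s + (R s * Real.cos θ) • ((-κ s) • tv s + τ s • bv s)
        + (R s * Real.sin θ) • ((-τ s) • nv s)) s := by
    have h := ((hγds.add (hnds.const_smul (R s * Real.cos θ))).add
      (hbds.const_smul (R s * Real.sin θ)))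
    have hfun : (fun s' => Φ s' (R s) θ)
        = fun s' => γ s' + (R s * Real.cos θ) • nv s' + (R s * Real.sin θ) • bv s' := by
      funext s'; rw [hΦ]
    rw [hfun]
    exact h
  have hψs : deriv (fun s' => ψ s' (R s) θ) s
      = f (tv s + (R s * Real.cos θ) • ((-κ s) • tv s + τ s • bv s)
        + (R s * Real.sin θ) • ((-τ s) • nv s)) := by
    have hcomp := hφd.hasFDerivAt.comp_hasDerivAt s hΦs
    have hfun : (fun s' => ψ s' (R s) θ) = fun s' => φ (Φ s' (R s) θ) := by
      funext s'; rw [hψ]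
    rw [hfun]
    exact hcomp.deriv
  -- combine s and θ derivatives
  have hvec : (tv s + (R s * Real.cos θ) • ((-κ s) • tv s + τ s • bv s)
        + (R s * Real.sin θ) • ((-τ s) • nv s))
      - τ s • ((-(R s * Real.sin θ)) • nv s + (R s * Real.cos θ) • bv s)
      = (1 - R s * κ s * Real.cos θ) • tv s := by
    module
  have hcomb : deriv (fun s' => ψ s' (R s) θ) s - τ s * deriv (fun θ' => ψ s (R s) θ') θ
      = (1 - R s * κ s * Real.cos θ) * f (tv s) := by
    rw [hψs, hψθ, ← smul_eq_mul (a := τ s), ← map_smul, ← map_sub, hvec, map_smul, smul_eq_mul]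
  -- positivity facts
  have hΞpos : 0 < 1 - R s * κ s * Real.cos θ := by
    nlinarith [Real.cos_le_one θ, Real.neg_one_le_cos θ, mul_pos (hRpos s) (hκpos s), hη]
  have hη' : 0 < 1 - R s * κ s := by linarith
  have hD : (0:ℝ) < (deriv R s) ^ 2 + (1 - R s * κ s) ^ 2 := by positivity
  -- the normal vector and its norm
  set v := R s • ((-(deriv R s)) • tv s
      + (1 - κ s * R s) • (Real.cos θ • nv s + Real.sin θ • bv s)) with hv
  have hNT : (inner ℝ (nv s) (tv s) : ℝ) = 0 := by rw [real_inner_comm]; exact hTN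
  have hBT : (inner ℝ (bv s) (tv s) : ℝ) = 0 := by rw [real_inner_comm]; exact hTB
  have hBN : (inner ℝ (bv s) (nv s) : ℝ) = 0 := by rw [real_inner_comm]; exact hNB
  have hsq : (inner ℝ v v : ℝ) = (R s) ^ 2 * ((deriv R s) ^ 2 + (1 - R s * κ s) ^ 2) := by
    simp only [hv, inner_add_left, inner_add_right, real_inner_smul_left,
      real_inner_smul_right, hTT, hTN, hNT, hTB, hBT, hNN, hNB, hBN, hBB]
    have hcs := Real.sin_sq_add_cos_sq θ
    linear_combination ((R s)^2 * (1 - κ s * R s)^2) * hcs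
  have hnorm_v : ‖v‖ = R s * Real.sqrt ((deriv R s) ^ 2 + (1 - R s * κ s) ^ 2) := by
    rw [norm_eq_sqrt_real_inner, hsq, Real.sqrt_mul (sq_nonneg _),
      Real.sqrt_sq (hRpos s).le]
  -- expand f v
  have hfv : f v = R s * ((-(deriv R s)) * f (tv s)
      + (1 - κ s * R s) * (Real.cos θ * f (nv s) + Real.sin θ * f (bv s))) := by
    rw [hv]
    simp only [map_add, map_smul, smul_eq_mul]
  have hψr' : deriv (fun r' => ψ s r' θ) (R s)
      = Real.cos θ * f (nv s) + Real.sin θ * f (bv s) := by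
    rw [hψr, map_add, map_smul, map_smul, smul_eq_mul, smul_eq_mul]
  -- assemble
  rw [hν s θ, ← hv, real_inner_smul_left, real_inner_comm, hgrad, hcomb, hψr', hfv, hnorm_v]
  have hsqrt : 0 < Real.sqrt ((deriv R s) ^ 2 + (1 - R s * κ s) ^ 2) := Real.sqrt_pos.mpr hD
  field_simp [(hRpos s).ne', hΞpos.ne', hsqrt.ne']
end
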